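/- arXiv:1310.7759 — 6 statements merged into one kernel-verified Lean document; each statement's English description precedes it below -/
import Mathlib

section
/- If T is a t-solely balanced μ-way (v,k,t) Steiner trade, then the μ-way (v+μ, k+1, t+1) trade T* obtained from T by the cyclic adjunction construction is a Steiner trade. -/
/-- The blocks of a collection `Ti` that contain a given subset `S`. -/
def blocksContaining (Ti : Finset (Finset ℕ)) (S : Finset ℕ) : Finset (Finset ℕ) :=
  Ti.filter (fun B => S ⊆ B)

/-- `T` is a μ-way (v,k,t) trade of volume `m` with point set `V`:
μ pairwise disjoint collections, each of `m` k-subsets of the v-set `V`,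
such that every t-subset of `V` is contained in the same number of blocks
of each collection. -/
structure IsTrade (μ v k t m : ℕ) (V : Finset ℕ) (T : Fin μ → Finset (Finset ℕ)) : Prop where
  cardV : V.card = v
  volume : ∀ i, (T i).card = m
  blockSub : ∀ i, ∀ B ∈ T i, B ⊆ V
  blockCard : ∀ i, ∀ B ∈ T i, B.card = k
  disj : ∀ i j, i ≠ j → Disjoint (T i) (T j)
  balanced : ∀ S : Finset ℕ, S.card = t → ∀ i j,
    (blocksContaining (T i) S).card = (blocksContaining (T j) S).card

/-- A μ-way (v,k,t) Steiner trade: a trade in which every t-subset occurs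
at most once in each collection. -/
def IsSteinerTrade (μ v k t m : ℕ) (V : Finset ℕ) (T : Fin μ → Finset (Finset ℕ)) : Prop :=
  IsTrade μ v k t m V T ∧
  ∀ S : Finset ℕ, S.card = t → ∀ i, (blocksContaining (T i) S).card ≤ 1

/-- The foundation of a μ-way trade: the union of all its blocks. -/
def foundation {μ : ℕ} (T : Fin μ → Finset (Finset ℕ)) : Finset ℕ :=
  Finset.univ.biUnion (fun i => (T i).biUnion id)

/-- `T` is t-solely balanced: no two distinct collections contain a common
(t+1)-subset. -/
def SolelyBalanced {μ : ℕ} (t : ℕ) (T : Fin μ → Finset (Finset ℕ)) : Prop :=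
  ∀ i j : Fin μ, i ≠ j → ∀ S : Finset ℕ, S.card = t + 1 →
    ¬ ((∃ B ∈ T i, S ⊆ B) ∧ (∃ B ∈ T j, S ⊆ B))


/-!
A block of `T*_i` has the form `x_j ∪ B` with `B ∈ T_{i+j}`, and the fresh point `x_j` records
both `j` and `B`; so the blocks of `T*_i` through a `(t+1)`-set `S` are counted by
`∑_j #{B ∈ T_{i+j} : S \ {x_j} ⊆ B}`. If `S` meets the new points, only the summand of that point
survives and it counts the blocks of one `T_l` through a `t`-set, which is balanced and at most one
by hypothesis. If `S` avoids them, the count is `∑_l #{B ∈ T_l : S ⊆ B}`, independent of `i`, and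
solely balancedness leaves at most one collection with a block through `S`, where `S` lies in at
most one block since a `t`-subset of it does.
-/

open Finset

theorem Finset.eq_and_eq_of_insert_eq_insert {α : Type*} [DecidableEq α] {a b : α}
    {s t : Finset α} (has : a ∉ s) (hat : a ∉ t) (h : insert a s = insert b t) :
    a = b ∧ s = t := by
  have hab : a = b := by
    have : a ∈ insert b t := h ▸ mem_insert_self a s
    simpa [hat] using this
  subst hab
  exact ⟨rfl, by simpa [erase_insert has, erase_insert hat] using congrArg (·.erase a) h⟩

theorem Fintype.sum_le_one_of_support_subsingleton {ι : Type*} [Fintype ι] {f : ι → ℕ}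
    (hle : ∀ i, f i ≤ 1) (hf : (Function.support f).Subsingleton) : ∑ i, f i ≤ 1 := by
  by_cases h : ∀ i, f i = 0
  · simp [h]
  · obtain ⟨i, hi⟩ := not_forall.mp h
    rw [Fintype.sum_eq_single i fun j hj => by_contra fun hfj => hj (hf hfj hi)]
    exact hle i

section BlocksContaining

variable {Ti : Finset (Finset ℕ)} {S S' : Finset ℕ}

theorem blocksContaining_empty : blocksContaining Ti ∅ = Ti :=
  filter_true_of_mem fun B _ => empty_subset B

theorem blocksContaining_anti (h : S ⊆ S') : blocksContaining Ti S' ⊆ blocksContaining Ti S :=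
  monotone_filter_right _ fun _ _ hB => h.trans hB

theorem blocksContaining_eq_empty_of_mem {a : ℕ} (haS : a ∈ S) (ha : ∀ B ∈ Ti, a ∉ B) :
    blocksContaining Ti S = ∅ :=
  filter_false_of_mem fun B hB hSB => ha B hB (hSB haS)

theorem card_blocksContaining_le_one_of_le_card {t : ℕ}
    (hst : ∀ S : Finset ℕ, #S = t → #(blocksContaining Ti S) ≤ 1) (hS : t ≤ #S) :
    #(blocksContaining Ti S) ≤ 1 := by
  obtain ⟨S', hS'S, hS'⟩ := exists_subset_card_eq hS
  exact (card_le_card (blocksContaining_anti hS'S)).trans (hst S' hS')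

end BlocksContaining

theorem SolelyBalanced.sum_card_blocksContaining_le_one {μ t : ℕ} {T : Fin μ → Finset (Finset ℕ)}
    (hsb : SolelyBalanced t T)
    (hst : ∀ S : Finset ℕ, #S = t → ∀ l, #(blocksContaining (T l) S) ≤ 1)
    {S : Finset ℕ} (hS : #S = t + 1) : ∑ l, #(blocksContaining (T l) S) ≤ 1 := by
  have hex : ∀ l, #(blocksContaining (T l) S) ≠ 0 → ∃ B ∈ T l, S ⊆ B := fun l hl => by
    obtain ⟨B, hB⟩ := card_ne_zero.mp hl
    exact ⟨B, mem_filter.mp hB⟩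
  refine Fintype.sum_le_one_of_support_subsingleton
    (fun l => card_blocksContaining_le_one_of_le_card (hst · · l) (by omega)) fun l hl l' hl' => ?_
  by_contra hne
  exact hsb l l' hne S hS ⟨hex l hl, hex l' hl'⟩

theorem IsTrade.notMem_of_mem {μ v k t m : ℕ} {V : Finset ℕ} {T : Fin μ → Finset (Finset ℕ)}
    (hT : IsTrade μ v k t m V T) {a : ℕ} (ha : a ∉ V) {l : Fin μ} {B : Finset ℕ} (hB : B ∈ T l) :
    a ∉ B :=
  fun haB => ha (hT.blockSub l B hB haB)

/-- The collection `T*_{i+1} = x_1 T_{i+1} ∪ x_2 T_{i+2} ∪ ⋯ ∪ x_μ T_{i+μ}` of the construction,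
with indices taken mod `μ` and counted from `0` in `Fin μ`; `x T` is `{insert x B | B ∈ T}`. -/
def cyclicAdjunction {μ : ℕ} (T : Fin μ → Finset (Finset ℕ)) (x : Fin μ → ℕ) (i : Fin μ) :
    Finset (Finset ℕ) :=
  univ.biUnion fun j => (T (i + j)).image (insert (x j))

namespace cyclicAdjunction

variable {μ : ℕ} {T : Fin μ → Finset (Finset ℕ)} {x : Fin μ → ℕ}

theorem mem_iff {i : Fin μ} {C : Finset ℕ} :
    C ∈ cyclicAdjunction T x i ↔ ∃ j, ∃ B ∈ T (i + j), insert (x j) B = C := by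
  simp [cyclicAdjunction]

theorem card_blocksContaining (hx : Function.Injective x)
    (hxT : ∀ l j, ∀ B ∈ T l, x j ∉ B) (i : Fin μ) (S : Finset ℕ) :
    #(blocksContaining (cyclicAdjunction T x i) S) =
      ∑ j, #(blocksContaining (T (i + j)) (S.erase (x j))) := by
  have hinj : ∀ l j, Set.InjOn (insert (x j)) (T l : Set (Finset ℕ)) :=
    fun l j B hB B' hB' h => (eq_and_eq_of_insert_eq_insert (hxT l j B hB) (hxT l j B' hB') h).2
  have hdisj : ((univ : Finset (Fin μ)) : Set (Fin μ)).PairwiseDisjoint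
      fun j => ((T (i + j)).image (insert (x j))).filter (S ⊆ ·) := by
    intro j _ j' _ hjj'
    refine disjoint_left.mpr fun C hC hC' => hjj' ?_
    obtain ⟨B, hB, rfl⟩ := mem_image.mp (mem_filter.mp hC).1
    obtain ⟨B', hB', hBB'⟩ := mem_image.mp (mem_filter.mp hC').1
    exact hx (eq_and_eq_of_insert_eq_insert (hxT _ j B hB) (hxT _ j B' hB') hBB'.symm).1
  rw [blocksContaining, cyclicAdjunction, filter_biUnion, card_biUnion hdisj]
  refine sum_congr rfl fun j _ => ?_
  rw [filter_image, card_image_of_injOn ((hinj _ j).mono fun B hB => (mem_filter.mp hB).1)]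
  simp only [blocksContaining, subset_insert_iff]

-- The other summands vanish: `S \ {x_j}` still contains `x_{j₀}`, which lies in no block.
theorem card_blocksContaining_of_mem (hx : Function.Injective x)
    (hxT : ∀ l j, ∀ B ∈ T l, x j ∉ B) (i : Fin μ) {S : Finset ℕ} {j₀ : Fin μ} (hj₀ : x j₀ ∈ S) :
    #(blocksContaining (cyclicAdjunction T x i) S) =
      #(blocksContaining (T (i + j₀)) (S.erase (x j₀))) := by
  rw [card_blocksContaining hx hxT, sum_eq_single j₀ _ (by simp)]
  intro j _ hj
  rw [blocksContaining_eq_empty_of_mem (mem_erase.mpr ⟨hx.ne (Ne.symm hj), hj₀⟩) (hxT _ j₀),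
    card_empty]

theorem card_blocksContaining_of_forall_notMem (hx : Function.Injective x)
    (hxT : ∀ l j, ∀ B ∈ T l, x j ∉ B) (i : Fin μ) {S : Finset ℕ}
    (hS : ∀ j, x j ∉ S) :
    #(blocksContaining (cyclicAdjunction T x i) S) = ∑ l, #(blocksContaining (T l) S) := by
  simp only [card_blocksContaining hx hxT, erase_eq_of_notMem (hS _)]
  exact Fintype.sum_bijective (i + ·) (add_right_injective i).bijective_of_finite _ _
    fun _ => rfl

end cyclicAdjunction

theorem isTrade_cyclicAdjunction {μ v k t m : ℕ} {V : Finset ℕ} {T : Fin μ → Finset (Finset ℕ)}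
    {x : Fin μ → ℕ} (hT : IsTrade μ v k t m V T) (hx : Function.Injective x)
    (hxV : ∀ j, x j ∉ V) :
    IsTrade μ (v + μ) (k + 1) (t + 1) (μ * m) (V ∪ univ.image x) (cyclicAdjunction T x) := by
  have hxT : ∀ l j, ∀ B ∈ T l, x j ∉ B := fun _ j _ hB => hT.notMem_of_mem (hxV j) hB
  constructor
  · rw [card_union_of_disjoint (by simpa [disjoint_right] using hxV), hT.cardV,
      card_image_of_injective _ hx, card_univ, Fintype.card_fin]
  · intro i
    simpa [blocksContaining_empty, hT.volume, mul_comm] using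
      cyclicAdjunction.card_blocksContaining hx hxT i ∅
  · intro i C hC
    obtain ⟨j, B, hB, rfl⟩ := cyclicAdjunction.mem_iff.mp hC
    exact insert_subset (mem_union_right _ (mem_image_of_mem x (mem_univ j)))
      ((hT.blockSub _ B hB).trans subset_union_left)
  · intro i C hC
    obtain ⟨j, B, hB, rfl⟩ := cyclicAdjunction.mem_iff.mp hC
    rw [card_insert_of_notMem (hxT _ j B hB), hT.blockCard _ B hB]
  · intro i i' hii'
    refine disjoint_left.mpr fun C hC hC' => ?_
    obtain ⟨j, B, hB, rfl⟩ := cyclicAdjunction.mem_iff.mp hC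
    obtain ⟨j', B', hB', hBB'⟩ := cyclicAdjunction.mem_iff.mp hC'
    obtain ⟨hjj', rfl⟩ := eq_and_eq_of_insert_eq_insert (hxT _ j' B' hB') (hxT _ j' B hB) hBB'
    obtain rfl := hx hjj'
    exact disjoint_left.mp (hT.disj _ _ fun h => hii' (add_right_cancel h)) hB hB'
  · intro S hS i i'
    by_cases hmeet : ∃ j₀, x j₀ ∈ S
    · obtain ⟨j₀, hj₀⟩ := hmeet
      rw [cyclicAdjunction.card_blocksContaining_of_mem hx hxT i hj₀,
        cyclicAdjunction.card_blocksContaining_of_mem hx hxT i' hj₀]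
      exact hT.balanced _ (by simp [card_erase_of_mem hj₀, hS]) _ _
    · rw [cyclicAdjunction.card_blocksContaining_of_forall_notMem hx hxT i (not_exists.mp hmeet),
        cyclicAdjunction.card_blocksContaining_of_forall_notMem hx hxT i' (not_exists.mp hmeet)]

theorem cyclic_construction_steiner_general (μ v k t m : ℕ) (V : Finset ℕ)
    (T : Fin μ → Finset (Finset ℕ)) (hT : IsSteinerTrade μ v k t m V T)
    (hsb : SolelyBalanced t T)
    (x : Fin μ → ℕ) (hxinj : Function.Injective x) (hxV : ∀ j, x j ∉ V) :
    IsSteinerTrade μ (v + μ) (k + 1) (t + 1) (μ * m) (V ∪ Finset.univ.image x)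
      (fun i => Finset.univ.biUnion
        (fun j : Fin μ => (T (i + j)).image (insert (x j)))) := by
  obtain ⟨hTrade, hSteiner⟩ := hT
  have hxT : ∀ l j, ∀ B ∈ T l, x j ∉ B := fun _ j _ hB => hTrade.notMem_of_mem (hxV j) hB
  refine ⟨isTrade_cyclicAdjunction hTrade hxinj hxV, fun S hS i => ?_⟩
  change #(blocksContaining (cyclicAdjunction T x i) S) ≤ 1
  by_cases hmeet : ∃ j₀, x j₀ ∈ S
  · obtain ⟨j₀, hj₀⟩ := hmeet
    rw [cyclicAdjunction.card_blocksContaining_of_mem hxinj hxT i hj₀]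
    exact hSteiner _ (by simp [card_erase_of_mem hj₀, hS]) _
  · rw [cyclicAdjunction.card_blocksContaining_of_forall_notMem hxinj hxT i (not_exists.mp hmeet)]
    exact hsb.sum_card_blocksContaining_le_one hSteiner hS

/-- If `T` is a t-solely balanced μ-way (v,k,t) Steiner trade, then the
μ-way (v+μ, k+1, t+1) trade obtained by the cyclic adjunction construction
is a Steiner trade. -/
theorem cyclic_construction_steiner (μ v k t m : ℕ) (hμ : 2 ≤ μ) (V : Finset ℕ)
    (T : Fin μ → Finset (Finset ℕ)) (hT : IsSteinerTrade μ v k t m V T)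
    (hsb : SolelyBalanced t T)
    (x : Fin μ → ℕ) (hxinj : Function.Injective x) (hxV : ∀ j, x j ∉ V) :
    IsSteinerTrade μ (v + μ) (k + 1) (t + 1) (μ * m) (V ∪ Finset.univ.image x)
      (fun i => Finset.univ.biUnion
        (fun j : Fin μ => (T (i + j)).image (insert (x j)))) :=
  cyclic_construction_steiner_general μ v k t m V T hT hsb x hxinj hxV
end

section
/- For every k ≥ 2 and every m ≥ 2, there exists a 3-way (v,k,1) Steiner trade of volume m (on some v-set); and there is no 3-way (v,k,1) trade of volume 1. Hence S_3s(1,k) = ℕ \ {1}. -/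
/-!
A 3-way trade of volume 1 cannot exist: balancing on single points forces the only blocks of two
collections to coincide, against disjointness. For volume `m ≥ 2`, take three pairwise disjoint
perfect matchings of `2m` points. Every point lies in exactly one block of each, which is all a
Steiner `(v, k, 1)` trade needs; adding the same fresh `(k - 2)`-set to the `r`-th edge of every
matching keeps this property and raises the block size to `k`.
-/

open Finset

structure IsIndexedPartition (V : Finset ℕ) (m : ℕ) (B : ℕ → Finset ℕ) : Prop where
  subset : ∀ r < m, B r ⊆ V
  exists_mem : ∀ x ∈ V, ∃ r < m, x ∈ B r
  eq_of_mem : ∀ {r r' x : ℕ}, r < m → r' < m → x ∈ B r → x ∈ B r' → r = r'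

namespace IsIndexedPartition

variable {V : Finset ℕ} {m : ℕ} {B : ℕ → Finset ℕ}

theorem card_blocksContaining_singleton (hB : IsIndexedPartition V m B) (x : ℕ) :
    #(blocksContaining ((range m).image B) {x}) = if x ∈ V then 1 else 0 := by
  simp only [blocksContaining, singleton_subset_iff]
  split_ifs with hx
  · obtain ⟨r, hr, hxr⟩ := hB.exists_mem x hx
    refine card_eq_one.2 ⟨B r, eq_singleton_iff_unique_mem.2 ⟨?_, ?_⟩⟩
    · exact mem_filter.2 ⟨mem_image_of_mem B (mem_range.2 hr), hxr⟩
    · simp only [mem_filter, mem_image, mem_range]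
      rintro _ ⟨⟨r', hr', rfl⟩, hxr'⟩
      rw [hB.eq_of_mem hr' hr hxr' hxr]
  · refine card_eq_zero.2 (filter_eq_empty_iff.2 ?_)
    simp only [mem_image, mem_range]
    rintro _ ⟨r, hr, rfl⟩ hxr
    exact hx (hB.subset r hr hxr)

theorem card_image (hB : IsIndexedPartition V m B) (hne : ∀ r < m, (B r).Nonempty) :
    #((range m).image B) = m := by
  rw [card_image_of_injOn, card_range]
  intro r hr r' hr' h
  obtain ⟨x, hx⟩ := hne r (mem_range.1 hr)
  exact hB.eq_of_mem (mem_range.1 hr) (mem_range.1 hr') hx (h ▸ hx)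

end IsIndexedPartition

theorem isSteinerTrade_of_isIndexedPartition {μ k m : ℕ} {V : Finset ℕ}
    {B : Fin μ → ℕ → Finset ℕ} (hB : ∀ i, IsIndexedPartition V m (B i)) (hk : 0 < k)
    (hcard : ∀ i, ∀ r < m, #(B i r) = k)
    (hne : ∀ i j, i ≠ j → ∀ r < m, ∀ r' < m, B i r ≠ B j r') :
    IsSteinerTrade μ #V k 1 m V fun i => (range m).image (B i) := by
  have hcount : ∀ S : Finset ℕ, #S = 1 → ∀ i,
      #(blocksContaining ((range m).image (B i)) S) = if ∃ x ∈ V, S = {x} then 1 else 0 := by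
    intro S hS i
    obtain ⟨x, rfl⟩ := card_eq_one.1 hS
    simp [(hB i).card_blocksContaining_singleton x]
  refine ⟨⟨rfl, fun i => (hB i).card_image fun r hr => ?_, ?_, ?_, ?_, ?_⟩, ?_⟩
  · exact card_pos.1 (hcard i r hr ▸ hk)
  · simp only [mem_image, mem_range]
    rintro i _ ⟨r, hr, rfl⟩
    exact (hB i).subset r hr
  · simp only [mem_image, mem_range]
    rintro i _ ⟨r, hr, rfl⟩
    exact hcard i r hr
  · intro i j hij
    simp only [disjoint_left, mem_image, mem_range]
    rintro _ ⟨r, hr, rfl⟩ ⟨r', hr', h⟩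
    exact hne i j hij r hr r' hr' h.symm
  · intro S hS i j
    rw [hcount S hS i, hcount S hS j]
  · intro S hS i
    rw [hcount S hS i]
    split_ifs <;> omega

theorem not_isTrade_volume_one {μ v k : ℕ} (hμ : 2 ≤ μ) (V : Finset ℕ)
    (T : Fin μ → Finset (Finset ℕ)) : ¬ IsTrade μ v k 1 1 V T := by
  intro hT
  let i : Fin μ := ⟨0, by omega⟩
  let j : Fin μ := ⟨1, by omega⟩
  obtain ⟨A, hA⟩ := card_eq_one.1 (hT.volume i)
  obtain ⟨B, hB⟩ := card_eq_one.1 (hT.volume j)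
  have hAB : A = B := by
    ext x
    have h := hT.balanced {x} (card_singleton x) i j
    simp only [blocksContaining, hA, hB, singleton_subset_iff, filter_singleton] at h
    by_cases hxA : x ∈ A <;> by_cases hxB : x ∈ B <;> simp [hxA, hxB] at h ⊢
  have hdisj := hT.disj i j (Fin.ne_of_val_ne zero_ne_one)
  rw [hA, hB, hAB, disjoint_self, bot_eq_empty] at hdisj
  exact singleton_ne_empty B hdisj

section Pad

def pad (n d r : ℕ) : Finset ℕ := Ico (n + r * d) (n + (r + 1) * d)

variable {n d r : ℕ}

theorem card_pad : #(pad n d r) = d := by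
  rw [pad, Nat.card_Ico, add_one_mul]
  omega

theorem mem_pad (hd : 0 < d) {x : ℕ} : x ∈ pad n d r ↔ n ≤ x ∧ (x - n) / d = r := by
  rw [pad, mem_Ico, Nat.div_eq_iff hd, add_one_mul]
  omega

theorem pad_subset {m : ℕ} (hr : r < m) : pad n d r ⊆ Ico n (n + m * d) := by
  have : (r + 1) * d ≤ m * d := Nat.mul_le_mul_right d hr
  intro x hx
  rw [pad, mem_Ico] at hx
  rw [mem_Ico]
  omega

theorem disjoint_range_pad : Disjoint (range n) (pad n d r) := by
  simp only [disjoint_left, pad, mem_range, mem_Ico]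
  omega

theorem union_pad_inter_range {s : Finset ℕ} (hs : s ⊆ range n) :
    (s ∪ pad n d r) ∩ range n = s := by
  rw [union_inter_distrib_right, inter_eq_left.2 hs, inter_comm,
    disjoint_iff_inter_eq_empty.1 disjoint_range_pad, union_empty]

end Pad

theorem IsIndexedPartition.union_pad {n m : ℕ} (d : ℕ) {B : ℕ → Finset ℕ}
    (hB : IsIndexedPartition (range n) m B) :
    IsIndexedPartition (range (n + m * d)) m fun r => B r ∪ pad n d r where
  subset r hr := by
    refine union_subset ((hB.subset r hr).trans (range_subset_range.2 (by omega))) ?_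
    exact (pad_subset hr).trans fun x hx => mem_range.2 (mem_Ico.1 hx).2
  exists_mem x hx := by
    rw [mem_range] at hx
    by_cases hxn : x < n
    · obtain ⟨r, hr, hxr⟩ := hB.exists_mem x (mem_range.2 hxn)
      exact ⟨r, hr, mem_union_left _ hxr⟩
    · have hd : 0 < d := Nat.pos_of_ne_zero (by rintro rfl; omega)
      refine ⟨(x - n) / d, (Nat.div_lt_iff_lt_mul hd).2 (by omega), ?_⟩
      exact mem_union_right _ ((mem_pad hd).2 ⟨by omega, rfl⟩)
  eq_of_mem {r r' x} hr hr' hx hx' := by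
    rcases mem_union.1 hx with hx | hx <;> rcases mem_union.1 hx' with hx' | hx'
    · exact hB.eq_of_mem hr hr' hx hx'
    · exact absurd (hB.subset r hr hx) (disjoint_right.1 disjoint_range_pad hx')
    · exact absurd (hB.subset r' hr' hx') (disjoint_right.1 disjoint_range_pad hx)
    · have hd : 0 < d := Nat.pos_of_ne_zero (by rintro rfl; simp [pad] at hx)
      exact ((mem_pad hd).1 hx).2.symm.trans ((mem_pad hd).1 hx').2

theorem isSteinerTrade_union_pad {μ n m c : ℕ} (d : ℕ) {B : Fin μ → ℕ → Finset ℕ}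
    (hB : ∀ i, IsIndexedPartition (range n) m (B i)) (hc : 0 < c)
    (hcard : ∀ i, ∀ r < m, #(B i r) = c)
    (hne : ∀ i j, i ≠ j → ∀ r < m, ∀ r' < m, B i r ≠ B j r') :
    IsSteinerTrade μ (n + m * d) (c + d) 1 m (range (n + m * d))
      fun i => (range m).image fun r => B i r ∪ pad n d r := by
  have h := isSteinerTrade_of_isIndexedPartition (k := c + d) (fun i => (hB i).union_pad d)
    (by omega)
    (fun i r hr => by
      rw [card_union_of_disjoint (disjoint_range_pad.mono_left ((hB i).subset r hr)),
        hcard i r hr, card_pad])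
    (fun i j hij r hr r' hr' h => hne i j hij r hr r' hr' <| by
      rw [← union_pad_inter_range (d := d) (r := r) ((hB i).subset r hr),
        ← union_pad_inter_range (d := d) (r := r') ((hB j).subset r' hr'), h])
  rwa [card_range] at h

/-- The two 1-factors of the cycle `0, 1, …, 2m - 1` and the 1-factor of its diameters
`{r, r + m}`. -/
def oneFactor (m : ℕ) : Fin 3 → ℕ → Finset ℕ
  | 0, r => {2 * r, 2 * r + 1}
  | 1, r => {2 * r + 1, if r + 1 = m then 0 else 2 * r + 2}
  | 2, r => {r, r + m}

section OneFactor

variable {m : ℕ}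

theorem isIndexedPartition_oneFactor (i : Fin 3) :
    IsIndexedPartition (range (2 * m)) m (oneFactor m i) where
  subset r hr x hx := by
    fin_cases i <;> simp only [oneFactor, mem_insert, mem_singleton, mem_range] at hx ⊢ <;>
      (try split_ifs at hx) <;> omega
  exists_mem x hx := by
    rw [mem_range] at hx
    fin_cases i
    · exact ⟨x / 2, by omega, by simp only [oneFactor, mem_insert, mem_singleton]; omega⟩
    · by_cases hx0 : x = 0
      · have hm : m - 1 + 1 = m := by omega
        exact ⟨m - 1, by omega, by simp [oneFactor, hm, hx0]⟩
      · refine ⟨(x - 1) / 2, by omega, ?_⟩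
        simp only [oneFactor, mem_insert, mem_singleton]
        split_ifs <;> omega
    · by_cases hxm : x < m
      · exact ⟨x, hxm, by simp [oneFactor]⟩
      · exact ⟨x - m, by omega, by simp only [oneFactor, mem_insert, mem_singleton]; omega⟩
  eq_of_mem {r r' x} hr hr' hx hx' := by
    fin_cases i <;> simp only [oneFactor, mem_insert, mem_singleton] at hx hx' <;>
      (try split_ifs at hx hx') <;> omega

theorem card_oneFactor (i : Fin 3) {r : ℕ} (hr : r < m) : #(oneFactor m i r) = 2 := by
  fin_cases i <;> refine card_pair ?_ <;> (try split_ifs) <;> omega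

theorem oneFactor_ne (hm : 2 ≤ m) {i j : Fin 3} (hij : i ≠ j) (r r' : ℕ) :
    oneFactor m i r ≠ oneFactor m j r' := by
  intro h
  have hsub : ∀ x ∈ oneFactor m i r, x ∈ oneFactor m j r' := fun x hx => h ▸ hx
  have hsup : ∀ x ∈ oneFactor m j r', x ∈ oneFactor m i r := fun x hx => h ▸ hx
  fin_cases i <;> fin_cases j <;> simp only [Fin.zero_eta, Fin.mk_one, Fin.reduceFinMk, ne_eq,
      not_true_eq_false, oneFactor, mem_insert, mem_singleton, forall_eq_or_imp, forall_eq]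
      at hij hsub hsup <;>
    (try split_ifs at hsub hsup) <;> omega

end OneFactor

/-- S_3s(1,k) = ℕ \ {1}: for every k ≥ 2 and every m ≥ 2 there exists a 3-way
(v,k,1) Steiner trade of volume m, and there is no 3-way (v,k,1) trade of
volume 1. -/
theorem spectrum_3way_t1 (k : ℕ) (hk : 2 ≤ k) :
    (∀ m, 2 ≤ m → ∃ (v : ℕ) (V : Finset ℕ) (T : Fin 3 → Finset (Finset ℕ)),
      IsSteinerTrade 3 v k 1 m V T) ∧
    (∀ (v : ℕ) (V : Finset ℕ) (T : Fin 3 → Finset (Finset ℕ)),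
      ¬ IsTrade 3 v k 1 1 V T) := by
  refine ⟨fun m hm => ?_, fun v V T => not_isTrade_volume_one (by norm_num) V T⟩
  obtain ⟨d, rfl⟩ : ∃ d, k = 2 + d := ⟨k - 2, by omega⟩
  exact ⟨_, _, _, isSteinerTrade_union_pad d isIndexedPartition_oneFactor two_pos
    (fun i _ hr => card_oneFactor i hr) (fun _ _ hij r _ r' _ => oneFactor_ne hm hij r r')⟩
end

section
/- Every 3-way (v,3,2) Steiner trade of volume 6 contains an element x of found(T) with r_x = 2, i.e., x lies in exactly two blocks of each collection. -/
/-!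
Every point of the foundation lies in at least two blocks of `T 0`: a block `B` of `T 1`
through `x` has its two pairs through `x` covered by blocks of `T 0`, and a single block
covering both would be `B` itself, contradicting disjointness of `T 0` and `T 1`. If no point
had `r_x = 2`, every `r_x` would be at least `3`, so counting incidences with the `6 · 3 = 18`
points of the blocks of `T 0` gives at most `6` points. But the `18` pairs covered by `T 0`
are distinct by the Steiner property, so the foundation has at least `7` points.
-/

open Finset

lemma blocksContaining_singleton (Ti : Finset (Finset ℕ)) (x : ℕ) :
    blocksContaining Ti {x} = {B ∈ Ti | x ∈ B} := by
  simp only [blocksContaining, singleton_subset_iff]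

lemma subset_foundation {μ : ℕ} {T : Fin μ → Finset (Finset ℕ)} {i : Fin μ} {B : Finset ℕ}
    (hB : B ∈ T i) : B ⊆ foundation T := fun _ hx =>
  mem_biUnion.mpr ⟨i, mem_univ _, mem_biUnion.mpr ⟨B, hB, hx⟩⟩

namespace IsTrade

variable {μ v k t m : ℕ} {V : Finset ℕ} {T : Fin μ → Finset (Finset ℕ)}

lemma exists_superset_mem (hT : IsTrade μ v k t m V T) {S B : Finset ℕ} (hS : S.card = t)
    {i : Fin μ} (hB : B ∈ T i) (hSB : S ⊆ B) (j : Fin μ) : ∃ C ∈ T j, S ⊆ C := by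
  have hpos : 0 < (blocksContaining (T j) S).card := by
    rw [← hT.balanced S hS i j]
    exact card_pos.mpr ⟨B, mem_filter.mpr ⟨hB, hSB⟩⟩
  obtain ⟨C, hC⟩ := card_pos.mp hpos
  exact ⟨C, mem_filter.mp hC⟩

lemma exists_mem_pair_subset (hT : IsTrade μ v k 2 m V T) {x y : ℕ} (hxy : x ≠ y)
    {i : Fin μ} {B : Finset ℕ} (hB : B ∈ T i) (hx : x ∈ B) (hy : y ∈ B) (j : Fin μ) :
    ∃ C ∈ T j, x ∈ C ∧ y ∈ C := by
  obtain ⟨C, hC, hxyC⟩ :=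
    hT.exists_superset_mem (card_pair hxy) hB (insert_subset hx (singleton_subset_iff.mpr hy)) j
  exact ⟨C, hC, hxyC (mem_insert_self x _), hxyC (mem_insert_of_mem (mem_singleton_self y))⟩

lemma exists_mem_of_mem_foundation (hT : IsTrade μ v k 2 m V T) (hk : 2 ≤ k) {x : ℕ}
    (hx : x ∈ foundation T) (j : Fin μ) : ∃ B ∈ T j, x ∈ B := by
  obtain ⟨i, -, hi⟩ := mem_biUnion.mp hx
  obtain ⟨B, hB, hxB⟩ := mem_biUnion.mp hi
  obtain ⟨y, hyB, hyx⟩ := exists_mem_ne (by rw [hT.blockCard i B hB]; omega) x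
  obtain ⟨C, hC, hxC, -⟩ := hT.exists_mem_pair_subset hyx.symm hB hxB hyB j
  exact ⟨C, hC, hxC⟩

lemma two_le_card_blocksContaining_singleton (hT : IsTrade μ v k 2 m V T) (hk : 2 ≤ k)
    {i j : Fin μ} (hij : i ≠ j) {x : ℕ} (hx : x ∈ foundation T) :
    2 ≤ (blocksContaining (T i) {x}).card := by
  by_contra! hlt
  have hle : (blocksContaining (T i) {x}).card ≤ 1 := Nat.le_of_lt_succ hlt
  obtain ⟨B, hB, hxB⟩ := hT.exists_mem_of_mem_foundation hk hx j
  obtain ⟨y, hyB, hyx⟩ := exists_mem_ne (by rw [hT.blockCard j B hB]; omega) x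
  obtain ⟨C, hC, hxC, -⟩ := hT.exists_mem_pair_subset hyx.symm hB hxB hyB i
  have hBC : B ⊆ C := by
    intro c hcB
    obtain rfl | hcx := eq_or_ne c x
    · exact hxC
    obtain ⟨D, hD, hxD, hcD⟩ := hT.exists_mem_pair_subset hcx.symm hB hxB hcB i
    have hDC : D = C := card_le_one.mp hle D (by simp [blocksContaining_singleton, hD, hxD])
      C (by simp [blocksContaining_singleton, hC, hxC])
    exact hDC ▸ hcD
  have hBeq : B = C :=
    eq_of_subset_of_card_le hBC (by rw [hT.blockCard i C hC, hT.blockCard j B hB])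
  exact disjoint_left.mp (hT.disj i j hij) (hBeq ▸ hC) hB

lemma sum_card_foundation_inter (hT : IsTrade μ v k t m V T) (i : Fin μ) :
    ∑ B ∈ T i, (foundation T ∩ B).card = m * k := by
  rw [sum_congr rfl fun B hB => by rw [inter_eq_right.mpr (subset_foundation hB),
    hT.blockCard i B hB], sum_const, hT.volume i, smul_eq_mul]

end IsTrade

lemma IsSteinerTrade.mul_choose_le {μ v k t m : ℕ} {V : Finset ℕ}
    {T : Fin μ → Finset (Finset ℕ)} (hT : IsSteinerTrade μ v k t m V T) (i : Fin μ) :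
    m * k.choose t ≤ (foundation T).card.choose t := by
  have hdisj : (T i : Set (Finset ℕ)).PairwiseDisjoint (powersetCard t) := by
    intro B₁ hB₁ B₂ hB₂ hne
    refine disjoint_left.mpr fun S hS₁ hS₂ => ?_
    rw [mem_powersetCard] at hS₁ hS₂
    have hpair : ({B₁, B₂} : Finset (Finset ℕ)) ⊆ blocksContaining (T i) S :=
      insert_subset (mem_filter.mpr ⟨hB₁, hS₁.1⟩)
        (singleton_subset_iff.mpr (mem_filter.mpr ⟨hB₂, hS₂.1⟩))
    have := card_le_card hpair
    rw [card_pair hne] at this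
    exact absurd (hT.2 S hS₁.2 i) (by omega)
  have hsub : (T i).biUnion (powersetCard t) ⊆ powersetCard t (foundation T) := by
    intro S hS
    obtain ⟨B, hB, hSB⟩ := mem_biUnion.mp hS
    rw [mem_powersetCard] at hSB ⊢
    exact ⟨hSB.1.trans (subset_foundation hB), hSB.2⟩
  calc m * k.choose t = ∑ B ∈ T i, (powersetCard t B).card := by
        rw [sum_congr rfl fun B hB => by rw [card_powersetCard, hT.1.blockCard i B hB],
          sum_const, hT.1.volume i, smul_eq_mul]
    _ = ((T i).biUnion (powersetCard t)).card := (card_biUnion hdisj).symm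
    _ ≤ (foundation T).card.choose t := by
        simpa only [card_powersetCard] using card_le_card hsub

/-- Every 3-way (v,3,2) Steiner trade of volume 6 contains an element x of its
foundation lying in exactly two blocks of each collection. -/
theorem volume_six_has_rx_two (v : ℕ) (V : Finset ℕ)
    (T : Fin 3 → Finset (Finset ℕ)) (hT : IsSteinerTrade 3 v 3 2 6 V T) :
    ∃ x ∈ foundation T, (blocksContaining (T 0) {x}).card = 2 := by
  by_contra! hne
  have hr : ∀ x ∈ foundation T, 3 ≤ #{B ∈ T 0 | x ∈ B} := fun x hx => by
    have h2 := hT.1.two_le_card_blocksContaining_singleton (by norm_num) (i := 0) (j := 1)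
      (by decide) hx
    have hx2 := hne x hx
    rw [blocksContaining_singleton] at h2 hx2
    omega
  have hsmall : (foundation T).card * 3 ≤ 18 :=
    (le_sum_card_inter hr).trans (hT.1.sum_card_foundation_inter 0).le
  have hpairs : 18 ≤ (foundation T).card.choose 2 := hT.mul_choose_le 0
  have hchoose : (foundation T).card.choose 2 ≤ Nat.choose 6 2 :=
    Nat.choose_le_choose 2 (by omega)
  rw [show Nat.choose 6 2 = 15 by decide] at hchoose
  omega
end

section
/- In a 3-way (v,k,2) Steiner trade, if every element x of the foundation satisfies r_x ≥ 3, then the volume is at least 2k + 1. -/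
open Finset

def IsPairPacking (𝒞 : Finset (Finset ℕ)) : Prop :=
  ∀ S : Finset ℕ, S.card = 2 → (blocksContaining 𝒞 S).card ≤ 1

section PairPacking

variable {𝒞 : Finset (Finset ℕ)}

theorem mem_blocksContaining_singleton {C : Finset ℕ} {a : ℕ} :
    C ∈ blocksContaining 𝒞 {a} ↔ C ∈ 𝒞 ∧ a ∈ C := by
  simp [blocksContaining]

theorem eq_of_pair_mem_blocks (h𝒞 : IsPairPacking 𝒞) {a b : ℕ} (hab : a ≠ b)
    {B C : Finset ℕ} (hB : B ∈ 𝒞) (hC : C ∈ 𝒞)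
    (haB : a ∈ B) (hbB : b ∈ B) (haC : a ∈ C) (hbC : b ∈ C) : B = C := by
  have hmem : ∀ D ∈ 𝒞, a ∈ D → b ∈ D → D ∈ blocksContaining 𝒞 {a, b} :=
    fun D hD haD hbD => mem_filter.mpr ⟨hD, insert_subset haD (singleton_subset_iff.mpr hbD)⟩
  exact card_le_one.mp (h𝒞 {a, b} (card_pair hab)) B (hmem B hB haB hbB) C (hmem C hC haC hbC)

theorem disjoint_erase_blocksContaining (h𝒞 : IsPairPacking 𝒞) {B : Finset ℕ} (hB : B ∈ 𝒞)
    {a b : ℕ} (ha : a ∈ B) (hb : b ∈ B) (hab : a ≠ b) :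
    Disjoint ((blocksContaining 𝒞 {a}).erase B) ((blocksContaining 𝒞 {b}).erase B) := by
  rw [disjoint_left]
  intro C hCa hCb
  rw [mem_erase, mem_blocksContaining_singleton] at hCa hCb
  exact hCa.1 (eq_of_pair_mem_blocks h𝒞 hab hCa.2.1 hB hCa.2.2 hCb.2.2 ha hb)

theorem two_mul_card_add_one_le_card (h𝒞 : IsPairPacking 𝒞) {B : Finset ℕ} (hB : B ∈ 𝒞)
    (hr : ∀ a ∈ B, 3 ≤ (blocksContaining 𝒞 {a}).card) :
    2 * B.card + 1 ≤ 𝒞.card := by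
  set F : ℕ → Finset (Finset ℕ) := fun a => (blocksContaining 𝒞 {a}).erase B
  have hF_card : ∀ a ∈ B, 2 ≤ (F a).card := fun a ha => by
    have h_erase : (F a).card = (blocksContaining 𝒞 {a}).card - 1 :=
      card_erase_of_mem (mem_blocksContaining_singleton.mpr ⟨hB, ha⟩)
    have h3 := hr a ha
    omega
  have hF_sub : B.biUnion F ⊆ 𝒞.erase B := biUnion_subset.mpr fun a _ =>
    erase_subset_erase B (filter_subset _ _)
  have hF_disj : (B : Set ℕ).PairwiseDisjoint F := fun a ha b hb hab =>
    disjoint_erase_blocksContaining h𝒞 hB ha hb hab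
  calc 2 * B.card + 1 = ∑ _a ∈ B, 2 + 1 := by rw [sum_const, smul_eq_mul, mul_comm]
    _ ≤ ∑ a ∈ B, (F a).card + 1 := by gcongr with a ha; exact hF_card a ha
    _ = (B.biUnion F).card + 1 := by rw [card_biUnion hF_disj]
    _ ≤ (𝒞.erase B).card + 1 := by gcongr
    _ = 𝒞.card := card_erase_add_one hB

end PairPacking

theorem mem_foundation {μ : ℕ} {T : Fin μ → Finset (Finset ℕ)} {i : Fin μ} {B : Finset ℕ}
    (hB : B ∈ T i) {x : ℕ} (hx : x ∈ B) : x ∈ foundation T := by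
  simp only [foundation, mem_biUnion]
  exact ⟨i, mem_univ i, B, hB, hx⟩

/-- In a nonvoid 3-way (v,k,2) Steiner trade, if every element x of the
foundation lies in at least 3 blocks, then the volume is at least 2k + 1. -/
theorem rx_ge_three_volume_bound (v k m : ℕ) (hm : 0 < m) (V : Finset ℕ)
    (T : Fin 3 → Finset (Finset ℕ)) (hT : IsSteinerTrade 3 v k 2 m V T)
    (hr : ∀ x ∈ foundation T, 3 ≤ (blocksContaining (T 0) {x}).card) :
    2 * k + 1 ≤ m := by
  obtain ⟨hTrade, hSteiner⟩ := hT
  obtain ⟨B, hB⟩ := card_pos.mp (hTrade.volume 0 ▸ hm)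
  have h := two_mul_card_add_one_le_card (fun S hS => hSteiner S hS 0) hB
    (fun a ha => hr a (mem_foundation hB ha))
  rwa [hTrade.blockCard 0 B hB, hTrade.volume 0] at h
end

section
/- For every m ≥ 3 there exists a 3-way (v,3,1) Steiner trade of volume m that is 1-solely balanced, i.e., no two of the three collections contain a common pair of elements. -/
/-!
Take `k` levels of `ℤ/m` as points and, for shift vectors `c i : Fin k → ℤ/m`, let the `i`-th
collection consist of the `m` translates `{(l, x + c i l) | l}` of one block. Each collection
then partitions the points, so every point lies in exactly one block of each collection: this is
a Steiner trade for `t = 1`. Two points `(l, z)`, `(l', z')` in a common block of collection `i`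
satisfy `z' - z = c i l' - c i l`, so if these differences are distinct for distinct `i`, no pair
lies in blocks of two collections. For three levels and three collections the rows
`(0,0,0), (0,1,2), (0,2,1)` of a Latin square work for every `m ≥ 3`, since any two of their
differences differ by a nonzero integer of absolute value at most `2`.
-/

open Finset

theorem SolelyBalanced.disjoint {μ t : ℕ} {T : Fin μ → Finset (Finset ℕ)}
    (h : SolelyBalanced t T) {i j : Fin μ} (hij : i ≠ j) (hT : ∀ B ∈ T i, t + 1 ≤ B.card) :
    Disjoint (T i) (T j) := by
  rw [Finset.disjoint_left]
  intro B hBi hBj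
  obtain ⟨S, hSB, hS⟩ := exists_subset_card_eq (hT B hBi)
  exact h i j hij S hS ⟨⟨B, hBi, hSB⟩, ⟨B, hBj, hSB⟩⟩

theorem card_blocksContaining_singleton {Ti : Finset (Finset ℕ)} {V : Finset ℕ}
    (hsub : ∀ B ∈ Ti, B ⊆ V) (hcover : ∀ u ∈ V, ∃! B, B ∈ Ti ∧ u ∈ B) (u : ℕ) :
    (blocksContaining Ti {u}).card = if u ∈ V then 1 else 0 := by
  split_ifs with hu
  · obtain ⟨B, hB, huniq⟩ := hcover u hu
    refine card_eq_one.mpr ⟨B, ?_⟩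
    ext B'
    simp only [blocksContaining, mem_filter, singleton_subset_iff, mem_singleton]
    exact ⟨huniq B', fun h => h ▸ hB⟩
  · refine card_eq_zero.mpr (filter_eq_empty_iff.mpr fun B hB hu' => ?_)
    exact hu (hsub B hB (singleton_subset_iff.mp hu'))

theorem isSteinerTrade_of_partitions {μ v k m : ℕ} {V : Finset ℕ}
    {T : Fin μ → Finset (Finset ℕ)} (hk : 2 ≤ k) (hV : V.card = v) (hcard : ∀ i, (T i).card = m)
    (hsub : ∀ i, ∀ B ∈ T i, B ⊆ V) (hblock : ∀ i, ∀ B ∈ T i, B.card = k)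
    (hcover : ∀ i, ∀ u ∈ V, ∃! B, B ∈ T i ∧ u ∈ B) (hsb : SolelyBalanced 1 T) :
    IsSteinerTrade μ v k 1 m V T := by
  refine ⟨⟨hV, hcard, hsub, hblock, fun i j hij => ?_, fun S hS i j => ?_⟩, fun S hS i => ?_⟩
  · exact hsb.disjoint hij fun B hB => hblock i B hB ▸ hk
  · obtain ⟨u, rfl⟩ := card_eq_one.mp hS
    rw [card_blocksContaining_singleton (hsub i) (hcover i),
      card_blocksContaining_singleton (hsub j) (hcover j)]
  · obtain ⟨u, rfl⟩ := card_eq_one.mp hS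
    rw [card_blocksContaining_singleton (hsub i) (hcover i)]
    split_ifs <;> simp

section CyclicTrade

variable {m k μ : ℕ}

/-- The point `z` of level `l`; the `k` levels fill `range (k * m)`. -/
def cyclicPoint (m : ℕ) (l : Fin k) (z : ZMod m) : ℕ := l * m + z.val

theorem exists_cyclicPoint_eq {u : ℕ} (hu : u < k * m) : ∃ l : Fin k, ∃ z : ZMod m,
    cyclicPoint m l z = u :=
  ⟨⟨u / m, Nat.div_lt_of_lt_mul (mul_comm k m ▸ hu)⟩, u,
    by rw [cyclicPoint, ZMod.val_natCast, Nat.div_add_mod']⟩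

def cyclicBlock (c : Fin μ → Fin k → ZMod m) (i : Fin μ) (x : ZMod m) : Finset ℕ :=
  univ.image fun l => cyclicPoint m l (x + c i l)

variable {c : Fin μ → Fin k → ZMod m} {i : Fin μ}

theorem mem_cyclicBlock {x : ZMod m} {u : ℕ} :
    u ∈ cyclicBlock c i x ↔ ∃ l, cyclicPoint m l (x + c i l) = u := by
  simp [cyclicBlock]

variable [NeZero m]

theorem cyclicPoint_div (l : Fin k) (z : ZMod m) : cyclicPoint m l z / m = l := by
  rw [cyclicPoint, add_comm, Nat.add_mul_div_right _ _ (NeZero.pos m),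
    Nat.div_eq_of_lt (ZMod.val_lt z), zero_add]

theorem cyclicPoint_mod (l : Fin k) (z : ZMod m) : cyclicPoint m l z % m = z.val := by
  rw [cyclicPoint, Nat.mul_add_mod_self_right, Nat.mod_eq_of_lt (ZMod.val_lt z)]

theorem cyclicPoint_inj {l l' : Fin k} {z z' : ZMod m} :
    cyclicPoint m l z = cyclicPoint m l' z' ↔ l = l' ∧ z = z' := by
  refine ⟨fun h => ⟨Fin.ext ?_, ZMod.val_injective m ?_⟩, fun ⟨hl, hz⟩ => hl ▸ hz ▸ rfl⟩
  · rw [← cyclicPoint_div l z, h, cyclicPoint_div]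
  · rw [← cyclicPoint_mod l z, h, cyclicPoint_mod]

theorem cyclicPoint_lt (l : Fin k) (z : ZMod m) : cyclicPoint m l z < k * m :=
  calc l * m + z.val < (l + 1) * m := by
        rw [add_one_mul]; exact Nat.add_lt_add_left (ZMod.val_lt z) _
    _ ≤ k * m := Nat.mul_le_mul_right m l.isLt

def cyclicTrade (c : Fin μ → Fin k → ZMod m) (i : Fin μ) : Finset (Finset ℕ) :=
  univ.image (cyclicBlock c i)

theorem cyclicPoint_mem_cyclicBlock {x z : ZMod m} {l : Fin k} :
    cyclicPoint m l z ∈ cyclicBlock c i x ↔ z = x + c i l := by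
  simp only [mem_cyclicBlock, cyclicPoint_inj]
  exact ⟨fun ⟨l', hl, hz⟩ => hl ▸ hz.symm, fun h => ⟨l, rfl, h.symm⟩⟩

theorem mem_cyclicTrade {B : Finset ℕ} : B ∈ cyclicTrade c i ↔ ∃ x, cyclicBlock c i x = B := by
  simp [cyclicTrade]

theorem card_cyclicBlock (x : ZMod m) : (cyclicBlock c i x).card = k := by
  rw [cyclicBlock, card_image_of_injective _ fun l l' h => (cyclicPoint_inj.mp h).1, card_univ,
    Fintype.card_fin]

theorem cyclicBlock_subset_range (x : ZMod m) : cyclicBlock c i x ⊆ range (k * m) := by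
  intro u hu
  obtain ⟨l, rfl⟩ := mem_cyclicBlock.mp hu
  exact mem_range.mpr (cyclicPoint_lt _ _)

theorem cyclicBlock_injective [NeZero k] : Function.Injective (cyclicBlock c i) := by
  intro x y h
  have hx : cyclicPoint m 0 (x + c i 0) ∈ cyclicBlock c i y :=
    h ▸ cyclicPoint_mem_cyclicBlock.mpr rfl
  exact add_right_cancel (cyclicPoint_mem_cyclicBlock.mp hx)

theorem card_cyclicTrade [NeZero k] : (cyclicTrade c i).card = m := by
  rw [cyclicTrade, card_image_of_injective _ cyclicBlock_injective, card_univ, ZMod.card]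

theorem existsUnique_mem_cyclicTrade {u : ℕ} (hu : u < k * m) :
    ∃! B, B ∈ cyclicTrade c i ∧ u ∈ B := by
  obtain ⟨l, z, rfl⟩ := exists_cyclicPoint_eq hu
  refine ⟨cyclicBlock c i (z - c i l), ⟨mem_cyclicTrade.mpr ⟨_, rfl⟩, ?_⟩, ?_⟩
  · exact cyclicPoint_mem_cyclicBlock.mpr (sub_add_cancel _ _).symm
  · rintro B ⟨hB, hmem⟩
    obtain ⟨x, rfl⟩ := mem_cyclicTrade.mp hB
    rw [cyclicPoint_mem_cyclicBlock.mp hmem, add_sub_cancel_right]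

def HasDistinctDifferences {G : Type*} [Sub G] (c : Fin μ → Fin k → G) : Prop :=
  ∀ l l', l ≠ l' → Function.Injective fun i => c i l' - c i l

theorem solelyBalanced_cyclicTrade (hc : HasDistinctDifferences c) :
    SolelyBalanced 1 (cyclicTrade c) := by
  rintro i j hij S hS ⟨⟨B, hB, hSB⟩, ⟨B', hB', hSB'⟩⟩
  obtain ⟨u, w, huw, rfl⟩ := card_eq_two.mp hS
  obtain ⟨x, rfl⟩ := mem_cyclicTrade.mp hB
  obtain ⟨y, rfl⟩ := mem_cyclicTrade.mp hB'
  obtain ⟨l, rfl⟩ := mem_cyclicBlock.mp (hSB (mem_insert_self _ _))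
  obtain ⟨l', rfl⟩ := mem_cyclicBlock.mp (hSB (mem_insert_of_mem (mem_singleton_self w)))
  have hll' : l ≠ l' := by rintro rfl; exact huw rfl
  have hu := cyclicPoint_mem_cyclicBlock.mp (hSB' (mem_insert_self _ _))
  have hw := cyclicPoint_mem_cyclicBlock.mp (hSB' (mem_insert_of_mem (mem_singleton_self _)))
  exact hij (hc l l' hll' (by linear_combination hw - hu))

theorem isSteinerTrade_cyclicTrade (hk : 2 ≤ k) (hc : HasDistinctDifferences c) :
    IsSteinerTrade μ (k * m) k 1 m (range (k * m)) (cyclicTrade c) := by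
  have : NeZero k := ⟨by omega⟩
  refine isSteinerTrade_of_partitions hk (card_range _) (fun _ => card_cyclicTrade)
    (fun i B hB => ?_) (fun i B hB => ?_) (fun i u hu => existsUnique_mem_cyclicTrade
      (mem_range.mp hu)) (solelyBalanced_cyclicTrade hc)
  · obtain ⟨x, rfl⟩ := mem_cyclicTrade.mp hB
    exact cyclicBlock_subset_range x
  · obtain ⟨x, rfl⟩ := mem_cyclicTrade.mp hB
    exact card_cyclicBlock x

end CyclicTrade

def latinShifts : Fin 3 → Fin 3 → ℤ := ![![0, 0, 0], ![0, 1, 2], ![0, 2, 1]]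

theorem latinShifts_differences_ne_zero_natAbs_le_two :
    ∀ i j l l' : Fin 3, i ≠ j → l ≠ l' →
      latinShifts i l' - latinShifts i l - (latinShifts j l' - latinShifts j l) ≠ 0 ∧
        (latinShifts i l' - latinShifts i l - (latinShifts j l' - latinShifts j l)).natAbs ≤ 2 := by
  decide

theorem hasDistinctDifferences_latinShifts {m : ℕ} (hm : 3 ≤ m) :
    HasDistinctDifferences fun i l => (latinShifts i l : ZMod m) := by
  intro l l' hll' i j h
  by_contra hij
  have hdvd :
      (m : ℤ) ∣ latinShifts i l' - latinShifts i l - (latinShifts j l' - latinShifts j l) := by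
    rw [← ZMod.intCast_zmod_eq_zero_iff_dvd]
    push_cast
    exact sub_eq_zero.mpr h
  obtain ⟨hne, hle⟩ := latinShifts_differences_ne_zero_natAbs_le_two i j l l' hij hll'
  exact hne (Int.eq_zero_of_dvd_of_natAbs_lt_natAbs hdvd (by omega))

/-- For every m ≥ 3 there exists a 3-way (v,3,1) Steiner trade of volume m
that is 1-solely balanced. -/
theorem solely_balanced_exists (m : ℕ) (hm : 3 ≤ m) :
    ∃ (v : ℕ) (V : Finset ℕ) (T : Fin 3 → Finset (Finset ℕ)),
      IsSteinerTrade 3 v 3 1 m V T ∧ SolelyBalanced 1 T := by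
  have : NeZero m := ⟨by omega⟩
  have hc := hasDistinctDifferences_latinShifts hm
  exact ⟨3 * m, range (3 * m), cyclicTrade _, isSteinerTrade_cyclicTrade (by norm_num) hc,
    solelyBalanced_cyclicTrade hc⟩
end

section
/- Every 3-way (v,3,2) trade of volume 7 is a Steiner trade; that is, in such a trade no pair of elements x, y of the foundation satisfies λ_{xy} ≥ 2. -/
/-!
If `λ_{xy} ≥ 2`, let `Z_i` be the set of third points of the blocks of `T i` through `x` and `y`.
For `z ∈ Z_j` the pair `{x, z}` also lies in a block of each other collection `T i`, and that
block avoids `y`, since otherwise it would be the block `{x, y, z}` of `T j`. So the blocks of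
`T i` through `x` avoiding `y` cover the `2 λ_{xy}` points of the other two `Z`'s, two at a time,
and symmetrically for `y`. With volume 7 and constant point degrees this forces, up to swapping
`x` and `y`, `λ_{xy} = 2`, exactly two blocks through `x` avoiding `y` in each collection, and at
most one block avoiding both. These two blocks of `T i` are then `{x} ∪ Z_j` and `{x} ∪ Z_k`, so
`{x} ∪ Z_2` is a block of both `T 0` and `T 1`, which are disjoint.
-/

open Finset

lemma eq_of_card_eq_three_of_mem {α : Type*} [DecidableEq α] {B : Finset α} {a b c : α}
    (hB : #B = 3) (ha : a ∈ B) (hb : b ∈ B) (hc : c ∈ B) (hab : a ≠ b) (hac : a ≠ c)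
    (hbc : b ≠ c) : B = {a, b, c} :=
  (eq_of_subset_of_card_le (by simp [insert_subset_iff, ha, hb, hc])
    (by rw [hB, card_eq_three.2 ⟨a, b, c, hab, hac, hbc, rfl⟩])).symm

lemma mem_blocksContaining_pair {Ti : Finset (Finset ℕ)} {x y : ℕ} {B : Finset ℕ} :
    B ∈ blocksContaining Ti {x, y} ↔ B ∈ Ti ∧ x ∈ B ∧ y ∈ B := by
  simp [blocksContaining, insert_subset_iff]

def thirdPoints (Ti : Finset (Finset ℕ)) (x y : ℕ) : Finset ℕ :=
  (Ti.biUnion id).filter (fun z => z ≠ x ∧ z ≠ y ∧ {x, y, z} ∈ Ti)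

def blocksThroughAvoiding (Ti : Finset (Finset ℕ)) (x y : ℕ) : Finset (Finset ℕ) :=
  Ti.filter (fun B => x ∈ B ∧ y ∉ B)

def blocksAvoiding (Ti : Finset (Finset ℕ)) (x y : ℕ) : Finset (Finset ℕ) :=
  Ti.filter (fun B => x ∉ B ∧ y ∉ B)

def linkAvoiding (Ti : Finset (Finset ℕ)) (x y : ℕ) : Finset ℕ :=
  (blocksThroughAvoiding Ti x y).biUnion (·.erase x)

section Collection

variable {Ti : Finset (Finset ℕ)} {x y z : ℕ}

lemma mem_thirdPoints : z ∈ thirdPoints Ti x y ↔ z ≠ x ∧ z ≠ y ∧ {x, y, z} ∈ Ti := by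
  simp only [thirdPoints, mem_filter, mem_biUnion, id, and_iff_right_iff_imp]
  exact fun h => ⟨_, h.2.2, by simp⟩

lemma thirdPoints_comm : thirdPoints Ti x y = thirdPoints Ti y x := by
  ext z
  simp only [mem_thirdPoints, insert_comm x y]
  tauto

lemma card_thirdPoints (h3 : ∀ B ∈ Ti, #B = 3) (hxy : x ≠ y) :
    #(thirdPoints Ti x y) = #(blocksContaining Ti {x, y}) := by
  refine card_bij (fun z _ => {x, y, z}) (fun z hz => ?_) (fun z₁ hz₁ z₂ hz₂ h => ?_)
    (fun B hB => ?_)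
  · obtain ⟨-, -, hz⟩ := mem_thirdPoints.1 hz
    exact mem_blocksContaining_pair.2 ⟨hz, by simp, by simp⟩
  · obtain ⟨hz₁x, hz₁y, -⟩ := mem_thirdPoints.1 hz₁
    have : z₁ ∈ ({x, y, z₂} : Finset ℕ) := h ▸ by simp
    simpa [hz₁x, hz₁y] using this
  · obtain ⟨hB, hx, hy⟩ := mem_blocksContaining_pair.1 hB
    obtain ⟨z, hz, hzxy⟩ := exists_mem_notMem_of_card_lt_card
      (s := {x, y}) (t := B) (by rw [h3 B hB, card_pair hxy]; norm_num)
    simp only [mem_insert, mem_singleton, not_or] at hzxy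
    have hB3 := eq_of_card_eq_three_of_mem (h3 B hB) hx hy hz hxy (Ne.symm hzxy.1)
      (Ne.symm hzxy.2)
    exact ⟨z, mem_thirdPoints.2 ⟨hzxy.1, hzxy.2, hB3 ▸ hB⟩, hB3.symm⟩

lemma mem_linkAvoiding :
    z ∈ linkAvoiding Ti x y ↔ z ≠ x ∧ ∃ B ∈ blocksThroughAvoiding Ti x y, z ∈ B := by
  simp only [linkAvoiding, mem_biUnion, mem_erase]
  tauto

lemma card_linkAvoiding_le (h3 : ∀ B ∈ Ti, #B = 3) :
    #(linkAvoiding Ti x y) ≤ 2 * #(blocksThroughAvoiding Ti x y) := by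
  rw [mul_comm]
  refine card_biUnion_le_card_mul _ _ _ fun B hB => ?_
  obtain ⟨hB, hx, -⟩ := mem_filter.1 hB
  rw [card_erase_of_mem hx, h3 B hB]

lemma card_blocksContaining_singleton_s18 :
    #(blocksContaining Ti {x}) =
      #(blocksContaining Ti {x, y}) + #(blocksThroughAvoiding Ti x y) := by
  rw [← card_filter_add_card_filter_not (s := blocksContaining Ti {x}) (fun B => y ∈ B)]
  simp only [blocksContaining, blocksThroughAvoiding, filter_filter, singleton_subset_iff,
    insert_subset_iff]

lemma card_eq_card_blocksContaining_singleton_add :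
    #Ti = #(blocksContaining Ti {x}) + #(blocksThroughAvoiding Ti y x) +
      #(blocksAvoiding Ti x y) := by
  rw [← card_filter_add_card_filter_not (s := Ti) (fun B => x ∈ B), add_assoc,
    ← card_filter_add_card_filter_not (s := Ti.filter fun B => x ∉ B) (fun B => y ∈ B)]
  simp only [blocksContaining, blocksThroughAvoiding, blocksAvoiding, filter_filter,
    singleton_subset_iff, and_comm]

end Collection

namespace IsTrade

variable {μ v k t m : ℕ} {V : Finset ℕ} {T : Fin μ → Finset (Finset ℕ)} {x y u w : ℕ}
  {i j l : Fin μ}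

lemma disjoint_thirdPoints (hT : IsTrade μ v k t m V T) (hij : i ≠ j) :
    Disjoint (thirdPoints (T i) x y) (thirdPoints (T j) x y) :=
  disjoint_left.2 fun _ hi hj =>
    disjoint_left.1 (hT.disj i j hij) (mem_thirdPoints.1 hi).2.2 (mem_thirdPoints.1 hj).2.2

lemma exists_mem_and_mem (hT : IsTrade μ v k 2 m V T) (huw : u ≠ w) {B : Finset ℕ}
    (hB : B ∈ T i) (hu : u ∈ B) (hw : w ∈ B) (j : Fin μ) : ∃ C ∈ T j, u ∈ C ∧ w ∈ C := by
  have hpos : 0 < #(blocksContaining (T j) {u, w}) := by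
    rw [← hT.balanced _ (card_pair huw) i j]
    exact card_pos.2 ⟨B, mem_blocksContaining_pair.2 ⟨hB, hu, hw⟩⟩
  obtain ⟨C, hC⟩ := card_pos.1 hpos
  exact ⟨C, mem_blocksContaining_pair.1 hC⟩

lemma sum_card_blocksContaining_pair (hT : IsTrade μ v k t m V T) (x : ℕ) (i : Fin μ) :
    ∑ w ∈ V.erase x, #(blocksContaining (T i) {x, w}) =
      #(blocksContaining (T i) {x}) * (k - 1) := by
  calc ∑ w ∈ V.erase x, #(blocksContaining (T i) {x, w})
      = ∑ w ∈ V.erase x, #((blocksContaining (T i) {x}).bipartiteAbove (· ∈ ·) w) := by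
        refine sum_congr rfl fun w _ => congrArg card ?_
        ext B
        simp [bipartiteAbove, blocksContaining, insert_subset_iff, and_assoc]
    _ = ∑ B ∈ blocksContaining (T i) {x}, #((V.erase x).bipartiteBelow (· ∈ ·) B) :=
        sum_card_bipartiteAbove_eq_sum_card_bipartiteBelow _
    _ = ∑ B ∈ blocksContaining (T i) {x}, (k - 1) := by
        refine sum_congr rfl fun B hB => ?_
        obtain ⟨hBT, hxB⟩ : B ∈ T i ∧ x ∈ B := by simpa [blocksContaining] using hB
        have : (V.erase x).bipartiteBelow (· ∈ ·) B = B.erase x := by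
          ext w
          simp only [bipartiteBelow, mem_filter, mem_erase]
          exact ⟨fun h => ⟨h.1.1, h.2⟩, fun h => ⟨⟨h.1, hT.blockSub i B hBT h.2⟩, h.2⟩⟩
        rw [this, card_erase_of_mem hxB, hT.blockCard i B hBT]
    _ = #(blocksContaining (T i) {x}) * (k - 1) := sum_const_nat fun _ _ => rfl

lemma card_blocksContaining_singleton_eq (hT : IsTrade μ v k 2 m V T) (hk : 1 < k) (x : ℕ)
    (i j : Fin μ) : #(blocksContaining (T i) {x}) = #(blocksContaining (T j) {x}) := by
  refine Nat.eq_of_mul_eq_mul_right (by omega : 0 < k - 1) ?_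
  rw [← hT.sum_card_blocksContaining_pair, ← hT.sum_card_blocksContaining_pair]
  exact sum_congr rfl fun w hw => hT.balanced _ (card_pair (mem_erase.1 hw).1.symm) i j

lemma exists_mem_blocksThroughAvoiding (hT : IsTrade μ v 3 2 m V T) (hxy : x ≠ y)
    (hij : i ≠ j) (hz : u ∈ thirdPoints (T j) x y) :
    ∃ B ∈ blocksThroughAvoiding (T i) x y, u ∈ B := by
  obtain ⟨hux, huy, hxyu⟩ := mem_thirdPoints.1 hz
  obtain ⟨B, hB, hx, hu⟩ := hT.exists_mem_and_mem (Ne.symm hux) hxyu (by simp) (by simp) i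
  refine ⟨B, mem_filter.2 ⟨hB, hx, fun hy => ?_⟩, hu⟩
  rw [eq_of_card_eq_three_of_mem (hT.blockCard i B hB) hx hy hu hxy hux.symm huy.symm] at hB
  exact disjoint_left.1 (hT.disj i j hij) hB hxyu

lemma thirdPoints_subset_linkAvoiding (hT : IsTrade μ v 3 2 m V T) (hxy : x ≠ y)
    (hij : i ≠ j) : thirdPoints (T j) x y ⊆ linkAvoiding (T i) x y := fun _ hu =>
  mem_linkAvoiding.2 ⟨(mem_thirdPoints.1 hu).1, hT.exists_mem_blocksThroughAvoiding hxy hij hu⟩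

lemma card_thirdPoints_add_le (hT : IsTrade μ v 3 2 m V T) (hxy : x ≠ y) (hij : i ≠ j)
    (hil : i ≠ l) (hjl : j ≠ l) :
    #(thirdPoints (T j) x y) + #(thirdPoints (T l) x y) ≤
      2 * #(blocksThroughAvoiding (T i) x y) := by
  rw [← card_union_of_disjoint (hT.disjoint_thirdPoints hjl)]
  exact (card_le_card (union_subset (hT.thirdPoints_subset_linkAvoiding hxy hij)
    (hT.thirdPoints_subset_linkAvoiding hxy hil))).trans (card_linkAvoiding_le (hT.blockCard i))

lemma linkAvoiding_eq (hT : IsTrade μ v 3 2 m V T) (hxy : x ≠ y) (hij : i ≠ j)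
    (hil : i ≠ l) (hjl : j ≠ l)
    (hp : 2 * #(blocksThroughAvoiding (T i) x y) ≤
      #(thirdPoints (T j) x y) + #(thirdPoints (T l) x y)) :
    linkAvoiding (T i) x y = thirdPoints (T j) x y ∪ thirdPoints (T l) x y := by
  refine (eq_of_subset_of_card_le (union_subset (hT.thirdPoints_subset_linkAvoiding hxy hij)
    (hT.thirdPoints_subset_linkAvoiding hxy hil)) ?_).symm
  rw [card_union_of_disjoint (hT.disjoint_thirdPoints hjl)]
  exact (card_linkAvoiding_le (hT.blockCard i)).trans hp

lemma card_blocksThroughAvoiding_eq (hT : IsTrade μ v k 2 m V T) (hk : 1 < k) (hxy : x ≠ y)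
    (i j : Fin μ) :
    #(blocksThroughAvoiding (T i) x y) = #(blocksThroughAvoiding (T j) x y) := by
  have hi := card_blocksContaining_singleton_s18 (Ti := T i) (x := x) (y := y)
  have hj := card_blocksContaining_singleton_s18 (Ti := T j) (x := x) (y := y)
  have hdeg := hT.card_blocksContaining_singleton_eq hk x i j
  have hpair := hT.balanced _ (card_pair hxy) i j
  omega

lemma card_blocksAvoiding_eq (hT : IsTrade μ v k 2 m V T) (hk : 1 < k) (hxy : x ≠ y)
    (i j : Fin μ) : #(blocksAvoiding (T i) x y) = #(blocksAvoiding (T j) x y) := by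
  have hi := card_eq_card_blocksContaining_singleton_add (Ti := T i) (x := x) (y := y)
  have hj := card_eq_card_blocksContaining_singleton_add (Ti := T j) (x := x) (y := y)
  have hdeg := hT.card_blocksContaining_singleton_eq hk x i j
  have hq := hT.card_blocksThroughAvoiding_eq hk hxy.symm i j
  rw [hT.volume i] at hi
  rw [hT.volume j] at hj
  omega

end IsTrade

/-- The counts to which `λ_{xy} ≥ 2` reduces a 3-way trade of volume 7, up to swapping `x`
and `y`. -/
structure IsTightPair {μ : ℕ} (T : Fin μ → Finset (Finset ℕ)) (x y : ℕ) : Prop where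
  card_thirdPoints : ∀ i, #(thirdPoints (T i) x y) = 2
  card_blocksThroughAvoiding : ∀ i, #(blocksThroughAvoiding (T i) x y) = 2
  card_blocksAvoiding_le : ∀ i, #(blocksAvoiding (T i) x y) ≤ 1
  swap_or_avoiding :
    (∀ i, #(blocksThroughAvoiding (T i) y x) = 2) ∨ ∀ i, #(blocksAvoiding (T i) x y) = 0

lemma IsTightPair.two_mul_card_blocksThroughAvoiding_le {μ : ℕ} {T : Fin μ → Finset (Finset ℕ)}
    {x y : ℕ} (hc : IsTightPair T x y) (i j l : Fin μ) :
    2 * #(blocksThroughAvoiding (T i) x y) ≤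
      #(thirdPoints (T j) x y) + #(thirdPoints (T l) x y) := by
  rw [hc.card_blocksThroughAvoiding, hc.card_thirdPoints, hc.card_thirdPoints]

namespace IsTrade

variable {μ v m : ℕ} {V : Finset ℕ} {T : Fin μ → Finset (Finset ℕ)} {x y u w : ℕ}
  {i j l : Fin μ} {B : Finset ℕ}

lemma mem_of_mem_thirdPoints (hT : IsTrade μ v 3 2 m V T) (hxy : x ≠ y) (hij : i ≠ j)
    (hil : i ≠ l) (hjl : j ≠ l)
    (hp : 2 * #(blocksThroughAvoiding (T i) x y) ≤
      #(thirdPoints (T j) x y) + #(thirdPoints (T l) x y))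
    (hB : B ∈ T i) (hx : x ∈ B) (hu : u ∈ B) (huZ : u ∈ thirdPoints (T i) x y) : y ∈ B := by
  by_contra hy
  have hlink : u ∈ linkAvoiding (T i) x y :=
    mem_linkAvoiding.2 ⟨(mem_thirdPoints.1 huZ).1, B, mem_filter.2 ⟨hB, hx, hy⟩, hu⟩
  rw [hT.linkAvoiding_eq hxy hij hil hjl hp, mem_union] at hlink
  rcases hlink with h | h
  · exact disjoint_left.1 (hT.disjoint_thirdPoints hij) huZ h
  · exact disjoint_left.1 (hT.disjoint_thirdPoints hil) huZ h

lemma exists_mem_notMem_of_mixed (hT : IsTrade μ v 3 2 m V T) (hxy : x ≠ y)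
    (hc : IsTightPair T x y) (hij : i ≠ j) (hil : i ≠ l) (hjl : j ≠ l)
    (hu : u ∈ thirdPoints (T j) x y) (hw : w ∈ thirdPoints (T l) x y)
    (hB : B ∈ T i) (hBu : u ∈ B) (hBw : w ∈ B) : ∃ C ∈ T j, u ∈ C ∧ w ∈ C ∧ x ∉ C := by
  have huw : u ≠ w := disjoint_iff_ne.1 (hT.disjoint_thirdPoints hjl) u hu w hw
  obtain ⟨C, hC, hCu, hCw⟩ := hT.exists_mem_and_mem huw hB hBu hBw j
  refine ⟨C, hC, hCu, hCw, fun hx => ?_⟩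
  have hy := hT.mem_of_mem_thirdPoints hxy hij.symm hjl hil
    (hc.two_mul_card_blocksThroughAvoiding_le j i l) hC hx hCu hu
  obtain ⟨hux, huy, -⟩ := mem_thirdPoints.1 hu
  obtain ⟨hwx, hwy, -⟩ := mem_thirdPoints.1 hw
  rw [eq_of_card_eq_three_of_mem (hT.blockCard j C hC) hx hy hCu hxy hux.symm huy.symm] at hCw
  simp [hwx, hwy, huw.symm] at hCw

lemma exists_mem_blocksAvoiding_of_mixed (hT : IsTrade μ v 3 2 m V T) (hxy : x ≠ y)
    (hc : IsTightPair T x y) (hij : i ≠ j) (hil : i ≠ l) (hjl : j ≠ l)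
    (hu : u ∈ thirdPoints (T j) x y) (hw : w ∈ thirdPoints (T l) x y)
    (hB : B ∈ T i) (hBu : u ∈ B) (hBw : w ∈ B) :
    ∃ C ∈ blocksAvoiding (T j) x y, u ∈ C ∧ w ∈ C := by
  obtain ⟨C, hC, hCu, hCw, hxC⟩ :=
    hT.exists_mem_notMem_of_mixed hxy hc hij hil hjl hu hw hB hBu hBw
  refine ⟨C, mem_filter.2 ⟨hC, hxC, fun hyC => ?_⟩, hCu, hCw⟩
  rcases hc.swap_or_avoiding with hq | hs
  · refine hxC (hT.mem_of_mem_thirdPoints hxy.symm hij.symm hjl hil ?_ hC hyC hCu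
      (thirdPoints_comm ▸ hu))
    rw [hq, thirdPoints_comm, hc.card_thirdPoints, thirdPoints_comm, hc.card_thirdPoints]
  · obtain ⟨D, hD, hDw, hDu, hxD⟩ :=
      hT.exists_mem_notMem_of_mixed hxy hc hil hij hjl.symm hw hu hB hBw hBu
    have hyD : y ∈ D := by
      by_contra hyD
      exact (card_pos.2 ⟨D, mem_filter.2 ⟨hD, hxD, hyD⟩⟩).ne' (hs l)
    obtain ⟨-, huy, -⟩ := mem_thirdPoints.1 hu
    obtain ⟨-, hwy, -⟩ := mem_thirdPoints.1 hw
    have huw : u ≠ w := disjoint_iff_ne.1 (hT.disjoint_thirdPoints hjl) u hu w hw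
    have hCD : C = D :=
      (eq_of_card_eq_three_of_mem (hT.blockCard j C hC) hyC hCu hCw huy.symm hwy.symm huw).trans
        (eq_of_card_eq_three_of_mem (hT.blockCard l D hD) hyD hDu hDw huy.symm hwy.symm huw).symm
    exact disjoint_left.1 (hT.disj j l hjl) hC (hCD ▸ hD)

/-- A mixed block `{x, u, w}` would force the other block of `T i` through `x` avoiding `y` to be
mixed too, and the single block of `T j` avoiding `x` and `y` to contain both mixed pairs. -/
lemma notMem_of_mixed (hT : IsTrade μ v 3 2 m V T) (hxy : x ≠ y) (hc : IsTightPair T x y)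
    (hij : i ≠ j) (hil : i ≠ l) (hjl : j ≠ l) (hB : B ∈ blocksThroughAvoiding (T i) x y)
    (hu : u ∈ thirdPoints (T j) x y) (hBu : u ∈ B) (hw : w ∈ thirdPoints (T l) x y) :
    w ∉ B := by
  intro hBw
  obtain ⟨hBT, hxB, -⟩ := mem_filter.1 hB
  have hne := disjoint_iff_ne.1 (hT.disjoint_thirdPoints (x := x) (y := y) hjl)
  obtain ⟨hux, -, -⟩ := mem_thirdPoints.1 hu
  obtain ⟨hwx, -, -⟩ := mem_thirdPoints.1 hw
  obtain ⟨u', hu', hu'u⟩ := exists_mem_ne (by rw [hc.card_thirdPoints j]; norm_num) u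
  obtain ⟨w', hw', hw'w⟩ := exists_mem_ne (by rw [hc.card_thirdPoints l]; norm_num) w
  obtain ⟨hu'x, -, -⟩ := mem_thirdPoints.1 hu'
  obtain ⟨hw'x, -, -⟩ := mem_thirdPoints.1 hw'
  have hBeq : B = {x, u, w} := eq_of_card_eq_three_of_mem (hT.blockCard i B hBT) hxB hBu hBw
    hux.symm hwx.symm (hne u hu w hw)
  have hlink := hT.linkAvoiding_eq hxy hij hil hjl
    (hc.two_mul_card_blocksThroughAvoiding_le i j l)
  obtain ⟨-, B', hB', hu'B'⟩ := mem_linkAvoiding.1 (hlink ▸ mem_union_left _ hu')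
  obtain ⟨-, B'', hB'', hw'B''⟩ := mem_linkAvoiding.1 (hlink ▸ mem_union_right _ hw')
  have hB'' : B'' = B' := by
    refine card_le_one.1 (by rw [card_erase_of_mem hB, hc.card_blocksThroughAvoiding])
      _ (mem_erase.2 ⟨?_, hB''⟩) _ (mem_erase.2 ⟨?_, hB'⟩)
    · rintro rfl
      simp [hBeq, hw'x, hw'w, (hne u hu w' hw').symm] at hw'B''
    · rintro rfl
      simp [hBeq, hu'x, hu'u, hne u' hu' w hw] at hu'B'
  subst hB''
  obtain ⟨C, hC, hCu, hCw⟩ :=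
    hT.exists_mem_blocksAvoiding_of_mixed hxy hc hij hil hjl hu hw hBT hBu hBw
  obtain ⟨C', hC', hCu', hCw'⟩ := hT.exists_mem_blocksAvoiding_of_mixed hxy hc hij hil hjl
    hu' hw' (mem_filter.1 hB').1 hu'B' hw'B''
  obtain rfl : C = C' := card_le_one.1 (hc.card_blocksAvoiding_le j) _ hC _ hC'
  rw [eq_of_card_eq_three_of_mem (hT.blockCard j C (mem_filter.1 hC).1) hCu hCw hCu'
    (hne u hu w hw) hu'u.symm (hne u' hu' w hw).symm] at hCw'
  simp [hw'w, (hne u hu w' hw').symm, (hne u' hu' w' hw').symm] at hCw'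

lemma insert_thirdPoints_mem (hT : IsTrade μ v 3 2 m V T) (hxy : x ≠ y)
    (hc : IsTightPair T x y) (hij : i ≠ j) (hil : i ≠ l) (hjl : j ≠ l) :
    insert x (thirdPoints (T l) x y) ∈ T i := by
  obtain ⟨w, hw⟩ : (thirdPoints (T l) x y).Nonempty :=
    card_pos.1 (by rw [hc.card_thirdPoints l]; norm_num)
  have hlink := hT.linkAvoiding_eq hxy hij hil hjl
    (hc.two_mul_card_blocksThroughAvoiding_le i j l)
  obtain ⟨-, B, hB, hwB⟩ := mem_linkAvoiding.1 (hlink ▸ mem_union_right _ hw)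
  obtain ⟨hBT, hxB, -⟩ := mem_filter.1 hB
  have hsub : B.erase x ⊆ thirdPoints (T l) x y := fun z hz => by
    have hz' : z ∈ linkAvoiding (T i) x y :=
      mem_linkAvoiding.2 ⟨(mem_erase.1 hz).1, B, hB, mem_of_mem_erase hz⟩
    rw [hlink, mem_union] at hz'
    exact hz'.resolve_left fun hzj =>
      hT.notMem_of_mixed hxy hc hij hil hjl hB hzj (mem_of_mem_erase hz) hw hwB
  have hBZ : B.erase x = thirdPoints (T l) x y := eq_of_subset_of_card_le hsub (by
    rw [card_erase_of_mem hxB, hT.blockCard i B hBT, hc.card_thirdPoints])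
  rwa [← hBZ, insert_erase hxB]

lemma not_isTightPair {T : Fin 3 → Finset (Finset ℕ)} (hT : IsTrade 3 v 3 2 m V T)
    (hxy : x ≠ y) : ¬ IsTightPair T x y := fun hc =>
  disjoint_left.1 (hT.disj 0 1 (by decide))
    (hT.insert_thirdPoints_mem hxy hc (j := 1) (l := 2) (by decide) (by decide) (by decide))
    (hT.insert_thirdPoints_mem hxy hc (j := 0) (l := 2) (by decide) (by decide) (by decide))

lemma isTightPair_of_two_le {T : Fin 3 → Finset (Finset ℕ)} (hT : IsTrade 3 v 3 2 7 V T)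
    (hxy : x ≠ y) {i : Fin 3} (h : 2 ≤ #(blocksContaining (T i) {x, y}))
    (hpq : #(blocksThroughAvoiding (T 0) x y) ≤ #(blocksThroughAvoiding (T 0) y x)) :
    IsTightPair T x y := by
  have hZ : ∀ j, #(thirdPoints (T j) x y) = #(blocksContaining (T i) {x, y}) := fun j => by
    rw [card_thirdPoints (hT.blockCard j) hxy]
    exact hT.balanced _ (card_pair hxy) j i
  have hp := (hT.card_blocksThroughAvoiding_eq (by norm_num) hxy · 0)
  have hq := (hT.card_blocksThroughAvoiding_eq (by norm_num) hxy.symm · 0)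
  have hs := (hT.card_blocksAvoiding_eq (by norm_num) hxy · 0)
  have hrp := hT.card_thirdPoints_add_le hxy (i := 0) (j := 1) (l := 2)
    (by decide) (by decide) (by decide)
  have hrq := hT.card_thirdPoints_add_le hxy.symm (i := 0) (j := 1) (l := 2)
    (by decide) (by decide) (by decide)
  rw [hZ, hZ] at hrp
  simp only [thirdPoints_comm (x := y), hZ] at hrq
  have hvol := card_eq_card_blocksContaining_singleton_add (Ti := T 0) (x := x) (y := y)
  rw [hT.volume, card_blocksContaining_singleton_s18 (y := y),
    ← card_thirdPoints (hT.blockCard 0) hxy, hZ] at hvol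
  refine ⟨fun j => by rw [hZ]; omega, fun j => by rw [hp]; omega, fun j => by rw [hs]; omega,
    (em _).imp (fun hq2 j => by rw [hq j]; exact hq2) (fun hq2 j => by rw [hs j]; omega)⟩
end IsTrade

/-- Every 3-way (v,3,2) trade of volume 7 is a Steiner trade. -/
theorem volume_seven_is_steiner (v : ℕ) (V : Finset ℕ)
    (T : Fin 3 → Finset (Finset ℕ)) (hT : IsTrade 3 v 3 2 7 V T) :
    IsSteinerTrade 3 v 3 2 7 V T := by
  refine ⟨hT, fun S hS i => ?_⟩
  obtain ⟨x, y, hxy, rfl⟩ := card_eq_two.1 hS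
  by_contra! h
  rcases le_total #(blocksThroughAvoiding (T 0) x y) #(blocksThroughAvoiding (T 0) y x)
    with hpq | hqp
  · exact hT.not_isTightPair hxy (hT.isTightPair_of_two_le hxy h hpq)
  · exact hT.not_isTightPair hxy.symm
      (hT.isTightPair_of_two_le hxy.symm (by rwa [pair_comm]) hqp)
end
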